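/- Best tubal-rank-r approximation: Let T be a third-order tensor of size N1 × N2 × N3 with entries in ℂ and let T = U ∗ Θ ∗ Vᴴ be a t-SVD of T (U, V satisfying Uᴴ ∗ U = U ∗ Uᴴ = I, Vᴴ ∗ V = V ∗ Vᴴ = I, Θ f-diagonal) such that for every frequency k : ZMod N3 the values (dft Θ(i,i))(k) are nonnegative reals, nonincreasing in i. For r ≤ min(N1, N2) define the truncation T_r by T_r(a,b) = ∑_{i < r} U(a,i) ⋆ Θ(i,i) ⋆ (Vᴴ)(i,b). Then ‖T − T_r‖_F = inf{ ‖T − X ∗ Y‖_F : X a tensor of size N1 × r × N3, Y a tensor of size r × N2 × N3 }, i.e. the truncated t-SVD attains the least Frobenius-norm error over all t-products with inner dimension r. -/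

import Mathlib

open scoped BigOperators

/-- Circular convolution of two tubes of length `n`. -/
noncomputable def cconv {n : ℕ} [NeZero n] (a b : ZMod n → ℂ) : ZMod n → ℂ :=
  fun t => ∑ s : ZMod n, a s * b (t - s)

/-- Discrete Fourier transform of a tube of length `n`. -/
noncomputable def dft {n : ℕ} [NeZero n] (a : ZMod n → ℂ) : ZMod n → ℂ :=
  fun k => ∑ t : ZMod n,
    a t * Complex.exp (-2 * (Real.pi : ℂ) * Complex.I * ((k.val : ℂ) * (t.val : ℂ)) / (n : ℂ))

/-- t-product of third-order tensors. -/
noncomputable def tProduct {N1 N2 N3 N4 : ℕ} [NeZero N3]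
    (A : Fin N1 → Fin N2 → ZMod N3 → ℂ) (B : Fin N2 → Fin N4 → ZMod N3 → ℂ) :
    Fin N1 → Fin N4 → ZMod N3 → ℂ :=
  fun i j => ∑ l : Fin N2, cconv (A i l) (B l j)

/-- Conjugate transpose of a third-order tensor. -/
noncomputable def tConjTranspose {N1 N2 N3 : ℕ}
    (A : Fin N1 → Fin N2 → ZMod N3 → ℂ) : Fin N2 → Fin N1 → ZMod N3 → ℂ :=
  fun i j t => starRingEnd ℂ (A j i (-t))

/-- Identity tensor of size `N × N × N3`. -/
noncomputable def tId (N N3 : ℕ) : Fin N → Fin N → ZMod N3 → ℂ :=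
  fun i j t => if i = j ∧ t = 0 then 1 else 0

/-- Frobenius norm of a third-order tensor. -/
noncomputable def frobNorm {N1 N2 N3 : ℕ} [NeZero N3]
    (T : Fin N1 → Fin N2 → ZMod N3 → ℂ) : ℝ :=
  Real.sqrt (∑ i : Fin N1, ∑ j : Fin N2, ∑ t : ZMod N3, ‖T i j t‖ ^ 2)

/-!
Taking the DFT along the tubes turns circular convolution into multiplication, so at each
frequency `k` the t-product becomes the ordinary product of the Fourier slices `tslice · k`,
and by Parseval `N3 * ‖A‖_F²` is the sum over `k` of the squared Frobenius norms of the slices.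
It therefore suffices to prove the Eckart–Young inequality slice by slice, for the matrix SVD
`Û D V̂ᴴ` whose truncation is the slice of `T_r`. After the unitary change of coordinates, `D` is
rectangular diagonal with nonincreasing moduli `|d_j|`. Let `K` be the column space of `X`
(dimension `≤ r`) and `q_j = ‖P_K e_j‖²` the leverage of `e_j`. The `j`-th column of `D - X Y`
has squared norm at least `|d_j|² (1 - q_j)`, where `0 ≤ q_j ≤ 1` and `∑ q_j = dim K ≤ r`
(the trace of `P_K`). Since `|d_j|` is nonincreasing, `∑ |d_j|² (1 - q_j)` is at least the tail
`∑_{j ≥ r} |d_j|²`, which is exactly the error of the truncation.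
-/

open Finset Matrix
open scoped ZMod ComplexConjugate

section Fourier

variable {N : ℕ} [NeZero N]

lemma dft_eq_zmod_dft (a : ZMod N → ℂ) : dft a = 𝓕 a := by
  funext k
  refine sum_congr rfl fun t _ => ?_
  have h : -(t * k) = ((-(t.val * k.val : ℤ) : ℤ) : ZMod N) := by
    push_cast [ZMod.natCast_val, ZMod.cast_id]
    ring
  rw [h, ZMod.stdAddChar_coe, smul_eq_mul, mul_comm]
  congr 2
  push_cast
  ring

lemma ZMod.dft_cconv (a b : ZMod N → ℂ) : 𝓕 (cconv a b) = 𝓕 a * 𝓕 b := by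
  funext k
  simp only [ZMod.dft_apply, smul_eq_mul, cconv, Pi.mul_apply]
  rw [sum_mul_sum]
  simp only [mul_sum]
  rw [sum_comm]
  refine sum_congr rfl fun s _ => Fintype.sum_equiv (Equiv.subRight s) _ _ fun t => ?_
  have h : -(t * k) = -(s * k) + -((t - s) * k) := by ring
  rw [Equiv.subRight_apply, h, AddChar.map_add_eq_mul]
  ring

lemma ZMod.dft_conj_neg (a : ZMod N → ℂ) (k : ZMod N) :
    𝓕 (fun t => conj (a (-t))) k = conj (𝓕 a k) := by
  simp only [ZMod.dft_apply, smul_eq_mul, map_sum, map_mul]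
  refine Fintype.sum_equiv (Equiv.neg (ZMod N)) _ _ fun t => ?_
  simp [← AddChar.map_neg_eq_conj]

lemma ZMod.sum_dft (a : ZMod N → ℂ) : ∑ k, 𝓕 a k = N * a 0 := by
  rw [← ZMod.dft_apply_zero, ZMod.dft_dft]
  simp

lemma ZMod.sum_norm_sq_dft (a : ZMod N → ℂ) :
    ∑ k, ‖𝓕 a k‖ ^ 2 = N * ∑ t, ‖a t‖ ^ 2 := by
  have h := ZMod.sum_dft (cconv a fun t => conj (a (-t)))
  simp only [ZMod.dft_cconv, Pi.mul_apply, ZMod.dft_conj_neg, Complex.mul_conj', cconv,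
    zero_sub, neg_neg] at h
  exact_mod_cast h

lemma ZMod.dft_delta : 𝓕 (fun t : ZMod N => if t = 0 then (1 : ℂ) else 0) = 1 := by
  funext k
  simp [ZMod.dft_apply]

end Fourier

section Projection

variable {𝕜 E ι : Type*} [RCLike 𝕜] [NormedAddCommGroup E] [InnerProductSpace 𝕜 E]
  [FiniteDimensional 𝕜 E] [Fintype ι]

lemma OrthonormalBasis.sum_norm_sq_starProjection (b : OrthonormalBasis ι 𝕜 E)
    (K : Submodule 𝕜 E) : ∑ i, ‖K.starProjection (b i)‖ ^ 2 = Module.finrank 𝕜 K := by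
  have hproj : LinearMap.IsProj K (K.starProjection : E →ₗ[𝕜] E) :=
    ⟨K.starProjection_apply_mem, fun _ hx => K.starProjection_eq_self_iff.mpr hx⟩
  have htrace := congrArg RCLike.re (LinearMap.trace_eq_sum_inner (K.starProjection : E →ₗ[𝕜] E) b)
  rw [hproj.trace, RCLike.natCast_re, map_sum] at htrace
  rw [htrace]
  refine sum_congr rfl fun i _ => ?_
  rw [← inner_conj_symm, RCLike.conj_re, ContinuousLinearMap.coe_coe,
    K.re_inner_starProjection_eq_normSq]
  rfl

lemma norm_sq_mul_one_sub_le_norm_sq_sub {K : Submodule 𝕜 E} {e w : E} (he : ‖e‖ = 1)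
    (hw : w ∈ K) (a : 𝕜) : ‖a‖ ^ 2 * (1 - ‖K.starProjection e‖ ^ 2) ≤ ‖a • e - w‖ ^ 2 := by
  have hw' : Kᗮ.starProjection w = 0 :=
    (Kᗮ).starProjection_apply_eq_zero_iff.mpr (K.le_orthogonal_orthogonal hw)
  have hperp : Kᗮ.starProjection (a • e) = Kᗮ.starProjection (a • e - w) := by
    rw [map_sub, hw', sub_zero]
  have hpyth := K.norm_sq_eq_add_norm_sq_starProjection (a • e)
  rw [map_smul, norm_smul, norm_smul, he, hperp] at hpyth
  have := Kᗮ.norm_starProjection_apply_le (a • e - w)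
  nlinarith [norm_nonneg (Kᗮ.starProjection (a • e - w))]

end Projection

lemma sum_tail_le_sum_mul_one_sub {c p : ℕ → ℝ} {m r : ℕ} (hc : Antitone c)
    (hc0 : ∀ j, 0 ≤ c j) (hp0 : ∀ j, 0 ≤ p j) (hp1 : ∀ j, p j ≤ 1)
    (hpr : ∑ j ∈ range m, p j ≤ r) :
    ∑ j ∈ range m, (if r ≤ j then c j else 0) ≤ ∑ j ∈ range m, c j * (1 - p j) := by
  -- compare every term with the threshold `c r`
  have hterm : ∀ j, (if r ≤ j then c j else 0) - c j * (1 - p j)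
      ≤ c r * (p j - if j < r then 1 else 0) := by
    intro j
    by_cases hj : r ≤ j
    · simp only [hj, if_true, not_lt.mpr hj, if_false]
      nlinarith [hc hj, hp0 j]
    · simp only [hj, if_false, not_le.mp hj, if_true]
      nlinarith [hc (not_le.mp hj).le, hp1 j]
  have hcount : ∑ j ∈ range m, (if j < r then (1 : ℝ) else 0) = (min m r : ℕ) := by
    have hfilter : (range m).filter (· < r) = range (min m r) := by
      ext j
      simp only [mem_filter, mem_range, lt_min_iff]
    rw [sum_boole, hfilter, card_range]
  have hmass : ∑ j ∈ range m, p j ≤ (min m r : ℕ) := by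
    rw [Nat.cast_min]
    refine le_min ?_ hpr
    simpa using sum_le_sum fun j (_ : j ∈ range m) => hp1 j
  have := sum_le_sum fun j (_ : j ∈ range m) => hterm j
  rw [sum_sub_distrib, ← mul_sum, sum_sub_distrib] at this
  nlinarith [hc0 r]

section Frobenius

variable {m n : Type*} [Fintype m] [Fintype n]

noncomputable def frobSq (M : Matrix m n ℂ) : ℝ :=
  ∑ i, ∑ j, ‖M i j‖ ^ 2

lemma frobSq_eq_re_trace (M : Matrix m n ℂ) : frobSq M = (Mᴴ * M).trace.re := by
  rw [frobSq, trace, Complex.re_sum, sum_comm]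
  refine sum_congr rfl fun j _ => ?_
  rw [diag_apply, mul_apply, Complex.re_sum]
  refine sum_congr rfl fun i _ => ?_
  rw [conjTranspose_apply, RCLike.star_def, mul_comm, Complex.mul_conj']
  norm_cast

lemma frobSq_unitary_mul_mul [DecidableEq m] [DecidableEq n] {U : Matrix m m ℂ}
    {V : Matrix n n ℂ} (hU : U ∈ unitaryGroup m ℂ) (hV : V ∈ unitaryGroup n ℂ)
    (M : Matrix m n ℂ) : frobSq (U * M * V) = frobSq M := by
  have hU' : Uᴴ * U = 1 := (mem_unitaryGroup_iff').mp hU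
  have hV' : V * Vᴴ = 1 := (mem_unitaryGroup_iff).mp hV
  calc frobSq (U * M * V) = (Vᴴ * (Mᴴ * (Uᴴ * U) * M) * V).trace.re := by
        rw [frobSq_eq_re_trace]
        simp only [conjTranspose_mul, Matrix.mul_assoc]
    _ = (V * Vᴴ * (Mᴴ * M)).trace.re := by rw [hU', Matrix.mul_one, trace_mul_cycle]
    _ = frobSq M := by rw [hV', Matrix.one_mul, frobSq_eq_re_trace]

lemma frobSq_eq_sum_norm_sq_col (M : Matrix m n ℂ) :
    frobSq M = ∑ j, ‖WithLp.toLp 2 (Mᵀ j)‖ ^ 2 := by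
  simp only [frobSq, EuclideanSpace.norm_sq_eq, transpose_apply]
  exact sum_comm

end Frobenius

noncomputable def rectDiag (n1 n2 : ℕ) (d : ℕ → ℂ) : Matrix (Fin n1) (Fin n2) ℂ :=
  of fun i j => if (i : ℕ) = j then d i else 0

lemma col_rectDiag {n1 n2 : ℕ} (d : ℕ → ℂ) (j : Fin n2) :
    WithLp.toLp 2 ((rectDiag n1 n2 d)ᵀ j)
      = if h : (j : ℕ) < n1 then d j • EuclideanSpace.basisFun (Fin n1) ℂ ⟨j, h⟩ else 0 := by
  ext i
  split_ifs with h
  · simp only [rectDiag, transpose_apply, of_apply, PiLp.smul_apply,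
      EuclideanSpace.basisFun_apply, PiLp.single_apply, Fin.ext_iff, smul_eq_mul, mul_ite, mul_one,
      mul_zero]
    split_ifs with hij <;> simp [hij]
  · simp [rectDiag]
    omega

lemma frobSq_rectDiag (n1 n2 : ℕ) (d : ℕ → ℂ) :
    frobSq (rectDiag n1 n2 d) = ∑ j ∈ range n2, if j < n1 then ‖d j‖ ^ 2 else 0 := by
  rw [frobSq_eq_sum_norm_sq_col, ← Fin.sum_univ_eq_sum_range]
  refine sum_congr rfl fun j _ => ?_
  rw [col_rectDiag]
  split_ifs <;> simp [norm_smul]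

lemma col_mul_mem_span_cols {n1 r n2 : ℕ} (X : Matrix (Fin n1) (Fin r) ℂ)
    (Y : Matrix (Fin r) (Fin n2) ℂ) (j : Fin n2) :
    WithLp.toLp 2 ((X * Y)ᵀ j) ∈ Submodule.span ℂ (Set.range fun l => WithLp.toLp 2 (Xᵀ l)) := by
  have h : WithLp.toLp 2 ((X * Y)ᵀ j) = ∑ l, Y l j • WithLp.toLp 2 (Xᵀ l) := by
    ext i
    simp [mul_apply, mul_comm]
  rw [h]
  exact Submodule.sum_mem _ fun l _ => Submodule.smul_mem _ _ (Submodule.subset_span ⟨l, rfl⟩)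

section Leverage

variable {n : ℕ}

noncomputable def leverage (K : Submodule ℂ (EuclideanSpace ℂ (Fin n))) (j : ℕ) : ℝ :=
  if h : j < n then ‖K.starProjection (EuclideanSpace.basisFun (Fin n) ℂ ⟨j, h⟩)‖ ^ 2 else 0

variable (K : Submodule ℂ (EuclideanSpace ℂ (Fin n)))

lemma leverage_nonneg (j : ℕ) : 0 ≤ leverage K j := by
  unfold leverage
  split_ifs <;> positivity

lemma leverage_le_one (j : ℕ) : leverage K j ≤ 1 := by
  unfold leverage
  split_ifs
  · exact pow_le_one₀ (norm_nonneg _) ((K.norm_starProjection_apply_le _).trans_eq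
      ((EuclideanSpace.basisFun (Fin n) ℂ).orthonormal.1 _))
  · exact zero_le_one

lemma sum_range_leverage_le (m : ℕ) : ∑ j ∈ range m, leverage K j ≤ Module.finrank ℂ K := calc
  ∑ j ∈ range m, leverage K j = ∑ j ∈ range (min n m), leverage K j := by
    refine (sum_subset (range_subset_range.2 (min_le_right _ _)) fun j hj hj' => ?_).symm
    simp only [mem_range, lt_min_iff, not_and_or, not_lt] at hj hj'
    simp only [leverage, dif_neg (by omega : ¬j < n)]
  _ ≤ ∑ j ∈ range n, leverage K j :=
    sum_le_sum_of_subset_of_nonneg (range_subset_range.2 (min_le_left _ _))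
      fun j _ _ => leverage_nonneg K j
  _ = ∑ i, ‖K.starProjection (EuclideanSpace.basisFun (Fin n) ℂ i)‖ ^ 2 := by
    rw [← Fin.sum_univ_eq_sum_range]
    exact sum_congr rfl fun i _ => dif_pos i.isLt
  _ = Module.finrank ℂ K := (EuclideanSpace.basisFun (Fin n) ℂ).sum_norm_sq_starProjection K

end Leverage

lemma norm_sq_mul_one_sub_leverage_le {n1 n2 : ℕ} (d : ℕ → ℂ)
    {K : Submodule ℂ (EuclideanSpace ℂ (Fin n1))} (j : Fin n2) {w : EuclideanSpace ℂ (Fin n1)}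
    (hw : w ∈ K) :
    (if (j : ℕ) < n1 then ‖d j‖ ^ 2 else 0) * (1 - leverage K j)
      ≤ ‖WithLp.toLp 2 ((rectDiag n1 n2 d)ᵀ j) - w‖ ^ 2 := by
  rw [col_rectDiag, leverage]
  split_ifs with h
  · exact norm_sq_mul_one_sub_le_norm_sq_sub
      ((EuclideanSpace.basisFun (Fin n1) ℂ).orthonormal.1 _) hw _
  · rw [zero_mul]
    positivity

theorem frobSq_rectDiag_tail_le {n1 n2 r : ℕ} {d : ℕ → ℂ} (hd : Antitone fun j => ‖d j‖)
    {K : Submodule ℂ (EuclideanSpace ℂ (Fin n1))} (hK : Module.finrank ℂ K ≤ r)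
    {M : Matrix (Fin n1) (Fin n2) ℂ} (hM : ∀ j, WithLp.toLp 2 (Mᵀ j) ∈ K) :
    frobSq (rectDiag n1 n2 fun j => if r ≤ j then d j else 0)
      ≤ frobSq (rectDiag n1 n2 d - M) := by
  set c : ℕ → ℝ := fun j => if j < n1 then ‖d j‖ ^ 2 else 0
  have hc0 : ∀ j, 0 ≤ c j := fun j => by simp only [c]; split_ifs <;> positivity
  have hc : Antitone c := by
    intro i j hij
    simp only [c]
    split_ifs with hj hi hi
    · exact pow_le_pow_left₀ (norm_nonneg _) (hd hij) 2
    · omega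
    · positivity
    · rfl
  calc frobSq (rectDiag n1 n2 fun j => if r ≤ j then d j else 0)
      = ∑ j ∈ range n2, if r ≤ j then c j else 0 := by
        rw [frobSq_rectDiag]
        refine sum_congr rfl fun j _ => ?_
        simp only [c]
        split_ifs <;> simp
    _ ≤ ∑ j ∈ range n2, c j * (1 - leverage K j) :=
        sum_tail_le_sum_mul_one_sub hc hc0 (leverage_nonneg K) (leverage_le_one K)
          ((sum_range_leverage_le K n2).trans (by exact_mod_cast hK))
    _ = ∑ j : Fin n2, c j * (1 - leverage K j) :=
        (Fin.sum_univ_eq_sum_range (fun j => c j * (1 - leverage K j)) n2).symm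
    _ ≤ ∑ j, ‖WithLp.toLp 2 ((rectDiag n1 n2 d)ᵀ j) - WithLp.toLp 2 (Mᵀ j)‖ ^ 2 :=
        sum_le_sum fun j _ => norm_sq_mul_one_sub_leverage_le d j (hM j)
    _ = frobSq (rectDiag n1 n2 d - M) := by
        rw [frobSq_eq_sum_norm_sq_col]
        rfl

lemma Fin.sum_univ_castLE {M : Type*} [AddCommMonoid M] {r N : ℕ} (h : r ≤ N) (f : Fin N → M) :
    ∑ i : Fin r, f (i.castLE h) = ∑ l : Fin N, if (l : ℕ) < r then f l else 0 := by
  change ∑ i, f (Fin.castLEEmb h i) = _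
  rw [← sum_filter, ← sum_map univ (Fin.castLEEmb h)]
  congr 1
  ext l
  simp only [mem_map, mem_univ, true_and, mem_filter, Fin.castLEEmb_apply]
  exact ⟨fun ⟨i, hi⟩ => hi ▸ i.isLt, fun hl => ⟨⟨l, hl⟩, rfl⟩⟩

lemma mul_sub_submatrix_castLE_mul {m n : Type*} {r N : ℕ} (h : r ≤ N)
    (A : Matrix m (Fin N) ℂ) (B : Matrix (Fin N) n ℂ) :
    A * B - A.submatrix id (Fin.castLE h) * B.submatrix (Fin.castLE h) id
      = A * diagonal (fun l : Fin N => if r ≤ (l : ℕ) then (1 : ℂ) else 0) * B := by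
  ext a b
  rw [Matrix.mul_assoc, Matrix.sub_apply, mul_apply, mul_apply, mul_apply]
  simp only [submatrix_apply, id, diagonal_mul]
  rw [Fin.sum_univ_castLE h fun l => A a l * B l b, ← sum_sub_distrib]
  refine sum_congr rfl fun l _ => ?_
  split_ifs <;> first | omega | simp

lemma diagonal_mul_rectDiag (n1 n2 r : ℕ) (d : ℕ → ℂ) :
    diagonal (fun l : Fin n1 => if r ≤ (l : ℕ) then (1 : ℂ) else 0) * rectDiag n1 n2 d
      = rectDiag n1 n2 fun j => if r ≤ j then d j else 0 := by
  ext i j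
  simp only [diagonal_mul, rectDiag, of_apply]
  split_ifs <;> simp_all

theorem frobSq_sub_truncation_le {n1 n2 r : ℕ} (hr : r ≤ n1) {U : Matrix (Fin n1) (Fin n1) ℂ}
    {V : Matrix (Fin n2) (Fin n2) ℂ} (hU : U ∈ unitaryGroup (Fin n1) ℂ)
    (hV : V ∈ unitaryGroup (Fin n2) ℂ) {d : ℕ → ℂ} (hd : Antitone fun j => ‖d j‖)
    (X : Matrix (Fin n1) (Fin r) ℂ) (Y : Matrix (Fin r) (Fin n2) ℂ) :
    frobSq (U * (rectDiag n1 n2 d * Vᴴ)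
        - U.submatrix id (Fin.castLE hr) * (rectDiag n1 n2 d * Vᴴ).submatrix (Fin.castLE hr) id)
      ≤ frobSq (U * (rectDiag n1 n2 d * Vᴴ) - X * Y) := by
  have hU' : Uᴴ ∈ unitaryGroup (Fin n1) ℂ := Unitary.star_mem hU
  have hV' : Vᴴ ∈ unitaryGroup (Fin n2) ℂ := Unitary.star_mem hV
  calc _ = frobSq (U * (rectDiag n1 n2 fun j => if r ≤ j then d j else 0) * Vᴴ) := by
        rw [mul_sub_submatrix_castLE_mul, ← diagonal_mul_rectDiag]
        simp only [Matrix.mul_assoc]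
    _ = frobSq (rectDiag n1 n2 fun j => if r ≤ j then d j else 0) :=
        frobSq_unitary_mul_mul hU hV' _
    _ ≤ frobSq (rectDiag n1 n2 d - (Uᴴ * X) * (Y * V)) :=
        frobSq_rectDiag_tail_le hd ((finrank_range_le_card _).trans_eq (Fintype.card_fin r))
          (col_mul_mem_span_cols _ _)
    _ = frobSq (Uᴴ * (U * (rectDiag n1 n2 d * Vᴴ) - X * Y) * V) := by
        have hUU : Uᴴ * U = 1 := mem_unitaryGroup_iff'.mp hU
        have hVV : Vᴴ * V = 1 := mem_unitaryGroup_iff'.mp hV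
        simp only [Matrix.mul_sub, Matrix.sub_mul, ← Matrix.mul_assoc, hUU, Matrix.one_mul]
        rw [Matrix.mul_assoc _ Vᴴ, hVV, Matrix.mul_one]
    _ = frobSq (U * (rectDiag n1 n2 d * Vᴴ) - X * Y) := frobSq_unitary_mul_mul hU' hV _

section Tensor

variable {N : ℕ} [NeZero N]

noncomputable def tslice {m p : ℕ} (A : Fin m → Fin p → ZMod N → ℂ) (k : ZMod N) :
    Matrix (Fin m) (Fin p) ℂ :=
  of fun i j => 𝓕 (A i j) k

lemma tslice_tProduct {m p q : ℕ} (A : Fin m → Fin p → ZMod N → ℂ)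
    (B : Fin p → Fin q → ZMod N → ℂ) (k : ZMod N) :
    tslice (tProduct A B) k = tslice A k * tslice B k := by
  ext i j
  simp only [tslice, tProduct, of_apply, mul_apply, map_sum, Finset.sum_apply, ZMod.dft_cconv,
    Pi.mul_apply]

lemma tslice_tConjTranspose {m p : ℕ} (A : Fin m → Fin p → ZMod N → ℂ) (k : ZMod N) :
    tslice (tConjTranspose A) k = (tslice A k)ᴴ := by
  ext i j
  exact ZMod.dft_conj_neg (A j i) k

lemma tslice_tId (n : ℕ) (k : ZMod N) : tslice (tId n N) k = 1 := by
  ext i j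
  unfold tslice tId
  by_cases hij : i = j
  · subst hij
    simpa using congrFun ZMod.dft_delta k
  · simp only [of_apply, hij, false_and, if_false, one_apply_ne hij]
    exact congrFun (map_zero (𝓕 : (ZMod N → ℂ) ≃ₗ[ℂ] (ZMod N → ℂ))) k

lemma tslice_sub {m p : ℕ} (A B : Fin m → Fin p → ZMod N → ℂ) (k : ZMod N) :
    tslice (A - B) k = tslice A k - tslice B k := by
  ext i j
  simp [tslice]

lemma tslice_mem_unitaryGroup {n : ℕ} {U : Fin n → Fin n → ZMod N → ℂ}
    (hU : tProduct (tConjTranspose U) U = tId n N) (k : ZMod N) :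
    tslice U k ∈ unitaryGroup (Fin n) ℂ := by
  have h := congrArg (tslice · k) hU
  simp only [tslice_tProduct, tslice_tConjTranspose, tslice_tId] at h
  exact mem_unitaryGroup_iff'.mpr h

lemma sum_frobSq_tslice {m p : ℕ} (A : Fin m → Fin p → ZMod N → ℂ) :
    ∑ k, frobSq (tslice A k) = N * frobNorm A ^ 2 := by
  rw [frobNorm, Real.sq_sqrt (by positivity), mul_sum]
  simp only [frobSq, tslice, of_apply]
  rw [sum_comm]
  refine sum_congr rfl fun i _ => ?_
  rw [mul_sum, sum_comm]
  exact sum_congr rfl fun j _ => ZMod.sum_norm_sq_dft (A i j)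

lemma frobNorm_le_of_frobSq_tslice_le {m p : ℕ} {A B : Fin m → Fin p → ZMod N → ℂ}
    (h : ∀ k, frobSq (tslice A k) ≤ frobSq (tslice B k)) : frobNorm A ≤ frobNorm B := by
  have hN : (0 : ℝ) < N := by exact_mod_cast Nat.pos_of_neZero N
  have := sum_le_sum fun k (_ : k ∈ univ) => h k
  rw [sum_frobSq_tslice, sum_frobSq_tslice] at this
  exact (pow_le_pow_iff_left₀ (Real.sqrt_nonneg _) (Real.sqrt_nonneg _) two_ne_zero).mp
    (le_of_mul_le_mul_left this hN)

end Tensor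

section FDiagonal

variable {N N1 N2 : ℕ} [NeZero N] {Θ : Fin N1 → Fin N2 → ZMod N → ℂ}

def IsFDiagonal (Θ : Fin N1 → Fin N2 → ZMod N → ℂ) : Prop :=
  ∀ (i : Fin N1) (j : Fin N2), (i : ℕ) ≠ j → Θ i j = 0

noncomputable def sliceDiag (Θ : Fin N1 → Fin N2 → ZMod N → ℂ) (k : ZMod N) : ℕ → ℂ :=
  fun i => if h : i < N1 ∧ i < N2 then 𝓕 (Θ ⟨i, h.1⟩ ⟨i, h.2⟩) k else 0

lemma IsFDiagonal.tProduct_apply (hΘ : IsFDiagonal Θ) {q : ℕ} (B : Fin N2 → Fin q → ZMod N → ℂ)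
    {i : Fin N1} {j : Fin N2} (hij : (i : ℕ) = j) (b : Fin q) :
    tProduct Θ B i b = cconv (Θ i j) (B j b) := by
  refine sum_eq_single j (fun l _ hl => ?_) (by simp)
  rw [hΘ i l (hij.trans_ne (Fin.val_ne_of_ne hl.symm))]
  funext t
  simp [cconv]

lemma IsFDiagonal.tslice_eq_rectDiag (hΘ : IsFDiagonal Θ) (k : ZMod N) :
    tslice Θ k = rectDiag N1 N2 (sliceDiag Θ k) := by
  ext i j
  simp only [tslice, rectDiag, sliceDiag, of_apply]
  split_ifs with hij h
  · obtain rfl : j = ⟨i, h.2⟩ := Fin.ext hij.symm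
    rfl
  · exact absurd ⟨i.isLt, hij ▸ j.isLt⟩ h
  · rw [hΘ i j hij]
    exact congrFun (map_zero (𝓕 : (ZMod N → ℂ) ≃ₗ[ℂ] (ZMod N → ℂ))) k

lemma antitone_norm_sliceDiag (k : ZMod N)
    (hpos : ∀ (i : Fin N1) (j : Fin N2), (i : ℕ) = j →
      (𝓕 (Θ i j) k).im = 0 ∧ 0 ≤ (𝓕 (Θ i j) k).re)
    (hdec : ∀ (i i' : Fin N1) (j j' : Fin N2), (i : ℕ) = j → (i' : ℕ) = j' → (i : ℕ) ≤ i' →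
      (𝓕 (Θ i' j') k).re ≤ (𝓕 (Θ i j) k).re) :
    Antitone fun i => ‖sliceDiag Θ k i‖ := by
  have hre : ∀ i, 0 ≤ (sliceDiag Θ k i).re ∧ ‖sliceDiag Θ k i‖ = (sliceDiag Θ k i).re := by
    intro i
    simp only [sliceDiag]
    split_ifs with h
    · obtain ⟨him, hnonneg⟩ := hpos ⟨i, h.1⟩ ⟨i, h.2⟩ rfl
      refine ⟨hnonneg, ?_⟩
      conv_lhs => rw [← Complex.re_add_im (𝓕 _ k), him]
      simp [abs_of_nonneg hnonneg]
    · simp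
  intro a b hab
  simp only [(hre _).2]
  by_cases hb : b < N1 ∧ b < N2
  · have ha : a < N1 ∧ a < N2 := ⟨hab.trans_lt hb.1, hab.trans_lt hb.2⟩
    simp only [sliceDiag, dif_pos ha, dif_pos hb]
    exact hdec _ _ _ _ rfl rfl hab
  · simpa [sliceDiag, dif_neg hb] using (hre a).1

end FDiagonal

theorem stmt4_general (N1 N2 N3 r : ℕ) [NeZero N3] (hr : r ≤ min N1 N2)
    (T : Fin N1 → Fin N2 → ZMod N3 → ℂ)
    (U : Fin N1 → Fin N1 → ZMod N3 → ℂ)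
    (Θ : Fin N1 → Fin N2 → ZMod N3 → ℂ)
    (V : Fin N2 → Fin N2 → ZMod N3 → ℂ)
    (hU1 : tProduct (tConjTranspose U) U = tId N1 N3)
    (hV1 : tProduct (tConjTranspose V) V = tId N2 N3)
    (hΘdiag : ∀ (i : Fin N1) (j : Fin N2), (i : ℕ) ≠ (j : ℕ) → Θ i j = 0)
    (hT : T = tProduct U (tProduct Θ (tConjTranspose V)))
    (hpos : ∀ (k : ZMod N3) (i : Fin N1) (j : Fin N2), (i : ℕ) = (j : ℕ) →
      (dft (Θ i j) k).im = 0 ∧ 0 ≤ (dft (Θ i j) k).re)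
    (hdec : ∀ (k : ZMod N3) (i i' : Fin N1) (j j' : Fin N2),
      (i : ℕ) = (j : ℕ) → (i' : ℕ) = (j' : ℕ) → (i : ℕ) ≤ (i' : ℕ) →
      (dft (Θ i' j') k).re ≤ (dft (Θ i j) k).re) :
    frobNorm (T - fun a b => ∑ i : Fin r,
        cconv (U a (Fin.castLE (hr.trans (min_le_left N1 N2)) i))
          (cconv (Θ (Fin.castLE (hr.trans (min_le_left N1 N2)) i)
                    (Fin.castLE (hr.trans (min_le_right N1 N2)) i))
            (tConjTranspose V (Fin.castLE (hr.trans (min_le_right N1 N2)) i) b))) =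
      sInf { e : ℝ | ∃ (X : Fin N1 → Fin r → ZMod N3 → ℂ)
          (Y : Fin r → Fin N2 → ZMod N3 → ℂ), e = frobNorm (T - tProduct X Y) } := by
  simp only [dft_eq_zmod_dft] at hpos hdec
  have hrL : r ≤ N1 := hr.trans (min_le_left N1 N2)
  let X₀ : Fin N1 → Fin r → ZMod N3 → ℂ := fun a i => U a (Fin.castLE hrL i)
  let Y₀ : Fin r → Fin N2 → ZMod N3 → ℂ := fun i b =>
    tProduct Θ (tConjTranspose V) (Fin.castLE hrL i) b
  suffices IsLeast {e : ℝ | ∃ (X : Fin N1 → Fin r → ZMod N3 → ℂ)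
      (Y : Fin r → Fin N2 → ZMod N3 → ℂ), e = frobNorm (T - tProduct X Y)}
      (frobNorm (T - tProduct X₀ Y₀)) by
    -- `T_r = X₀ ∗ Y₀` because `Θ` is f-diagonal
    convert this.csInf_eq.symm using 3
    funext a b
    exact sum_congr rfl fun i _ => congrArg (cconv _) (IsFDiagonal.tProduct_apply hΘdiag _
      (i := Fin.castLE hrL i) (j := Fin.castLE (hr.trans (min_le_right N1 N2)) i) rfl b).symm
  refine ⟨⟨X₀, Y₀, rfl⟩, ?_⟩
  rintro _ ⟨X, Y, rfl⟩
  refine frobNorm_le_of_frobSq_tslice_le fun k => ?_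
  have hX₀ : tslice X₀ k = (tslice U k).submatrix id (Fin.castLE hrL) := rfl
  have hY₀ : tslice Y₀ k
      = (tslice (tProduct Θ (tConjTranspose V)) k).submatrix (Fin.castLE hrL) id := rfl
  rw [tslice_sub, tslice_sub, tslice_tProduct X₀, hX₀, hY₀, hT]
  simp only [tslice_tProduct, tslice_tConjTranspose, IsFDiagonal.tslice_eq_rectDiag hΘdiag]
  exact frobSq_sub_truncation_le hrL (tslice_mem_unitaryGroup hU1 k)
    (tslice_mem_unitaryGroup hV1 k) (antitone_norm_sliceDiag k (hpos k) (hdec k)) _ _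

/-- the truncated t-SVD is a best tubal-rank-`r` approximation in
Frobenius norm. -/
theorem stmt4 (N1 N2 N3 r : ℕ) [NeZero N3] (hr : r ≤ min N1 N2)
    (T : Fin N1 → Fin N2 → ZMod N3 → ℂ)
    (U : Fin N1 → Fin N1 → ZMod N3 → ℂ)
    (Θ : Fin N1 → Fin N2 → ZMod N3 → ℂ)
    (V : Fin N2 → Fin N2 → ZMod N3 → ℂ)
    (hU1 : tProduct (tConjTranspose U) U = tId N1 N3)
    (hU2 : tProduct U (tConjTranspose U) = tId N1 N3)
    (hV1 : tProduct (tConjTranspose V) V = tId N2 N3)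
    (hV2 : tProduct V (tConjTranspose V) = tId N2 N3)
    (hΘdiag : ∀ (i : Fin N1) (j : Fin N2), (i : ℕ) ≠ (j : ℕ) → Θ i j = 0)
    (hT : T = tProduct U (tProduct Θ (tConjTranspose V)))
    (hpos : ∀ (k : ZMod N3) (i : Fin N1) (j : Fin N2), (i : ℕ) = (j : ℕ) →
      (dft (Θ i j) k).im = 0 ∧ 0 ≤ (dft (Θ i j) k).re)
    (hdec : ∀ (k : ZMod N3) (i i' : Fin N1) (j j' : Fin N2),
      (i : ℕ) = (j : ℕ) → (i' : ℕ) = (j' : ℕ) → (i : ℕ) ≤ (i' : ℕ) →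
      (dft (Θ i' j') k).re ≤ (dft (Θ i j) k).re) :
    frobNorm (T - fun a b => ∑ i : Fin r,
        cconv (U a (Fin.castLE (hr.trans (min_le_left N1 N2)) i))
          (cconv (Θ (Fin.castLE (hr.trans (min_le_left N1 N2)) i)
                    (Fin.castLE (hr.trans (min_le_right N1 N2)) i))
            (tConjTranspose V (Fin.castLE (hr.trans (min_le_right N1 N2)) i) b))) =
      sInf { e : ℝ | ∃ (X : Fin N1 → Fin r → ZMod N3 → ℂ)
          (Y : Fin r → Fin N2 → ZMod N3 → ℂ), e = frobNorm (T - tProduct X Y) } :=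
  stmt4_general N1 N2 N3 r hr T U Θ V hU1 hV1 hΘdiag hT hpos hdec
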